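/- Every nef class D ∈ Λ₆ with ⟨−K₆, D⟩ = 3 is either equal to −K₆ or satisfies ⟨D, D⟩ = 1 (i.e., is a twisted cubic); consequently the number of nef classes of anticanonical degree 3 in Λ₆ is 72 + 1 = 73. -/

import Mathlib

/-- The intersection pairing on the Picard lattice `Λ_r = ℤ^(r+1)`:
`⟨x, y⟩ = x₀y₀ − x₁y₁ − ⋯ − x_r y_r`. -/
def pair {r : ℕ} (x y : Fin (r + 1) → ℤ) : ℤ :=
  x 0 * y 0 - ∑ i : Fin r, x i.succ * y i.succ

/-- The canonical class `K_r = (−3, 1, …, 1)`. -/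
def Kc (r : ℕ) : Fin (r + 1) → ℤ := fun i => if i = 0 then -3 else 1

/-- Exceptional classes (classes of `(−1)`-curves). -/
def Exceptional {r : ℕ} (E : Fin (r + 1) → ℤ) : Prop :=
  pair E E = -1 ∧ pair (Kc r) E = -1

/-- Nef classes: nonnegative pairing with every exceptional class. -/
def Nef {r : ℕ} (D : Fin (r + 1) → ℤ) : Prop :=
  ∀ E : Fin (r + 1) → ℤ, Exceptional E → 0 ≤ pair D E

/-- Conics: nef classes `Q` with `⟨Q,Q⟩ = 0` and `⟨K,Q⟩ = −2`. -/
def Conic {r : ℕ} (Q : Fin (r + 1) → ℤ) : Prop :=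
  Nef Q ∧ pair Q Q = 0 ∧ pair (Kc r) Q = -2

/-- Twisted cubics: nef classes `C` with `⟨C,C⟩ = 1` and `⟨K,C⟩ = −3`. -/
def TwistedCubic {r : ℕ} (C : Fin (r + 1) → ℤ) : Prop :=
  Nef C ∧ pair C C = 1 ∧ pair (Kc r) C = -3

/-!
For a class `D` of degree 3 put `α = D + K₆`. Then `α` lies in `K₆ᗮ`, which is negative definite
and even (the `E₆` root lattice), and `α² = D² - 3`; so `D² ≤ 3` with equality only for
`D = -K₆`, and `D²` is odd. Conversely, if `D² ≥ 1` then `α² ≥ -2`, and Cauchy–Schwarz in `K₆ᗮ`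
against `3E + K₆` gives `|α·E| ≤ 1`, i.e. `D·E ≥ 0`, for every exceptional class `E`. Hence the
nef classes of degree 3 are `-K₆` and the `-K₆ + α` for the 72 roots `α` of `E₆`. The remaining
inequality `D² ≥ 1` for nef `D`, and the count, are finite checks over the box
`1 ≤ D₀ ≤ 5`, `-2 ≤ Dᵢ ≤ 0` to which the 27 lines confine such `D`.
-/

section Pairing

variable {r : ℕ}

lemma pair_comm (x y : Fin (r + 1) → ℤ) : pair x y = pair y x := by
  simp only [pair, mul_comm]

lemma pair_add_left (x y z : Fin (r + 1) → ℤ) : pair (x + y) z = pair x z + pair y z := by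
  simp only [pair, Pi.add_apply, add_mul, Finset.sum_add_distrib]
  ring

lemma pair_smul_left (n : ℤ) (x y : Fin (r + 1) → ℤ) : pair (n • x) y = n * pair x y := by
  simp only [pair, Pi.smul_apply, smul_eq_mul, mul_assoc, ← Finset.mul_sum]
  ring

lemma pair_neg_left (x y : Fin (r + 1) → ℤ) : pair (-x) y = -pair x y := by
  simpa using pair_smul_left (-1) x y

lemma pair_sub_left (x y z : Fin (r + 1) → ℤ) : pair (x - y) z = pair x z - pair y z := by
  rw [sub_eq_add_neg, pair_add_left, pair_neg_left, sub_eq_add_neg]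

lemma pair_add_right (x y z : Fin (r + 1) → ℤ) : pair x (y + z) = pair x y + pair x z := by
  rw [pair_comm, pair_add_left, pair_comm y, pair_comm z]

lemma pair_smul_right (n : ℤ) (x y : Fin (r + 1) → ℤ) : pair x (n • y) = n * pair x y := by
  rw [pair_comm, pair_smul_left, pair_comm]

lemma pair_neg_right (x y : Fin (r + 1) → ℤ) : pair x (-y) = -pair x y := by
  rw [pair_comm, pair_neg_left, pair_comm]

lemma pair_sub_right (x y z : Fin (r + 1) → ℤ) : pair x (y - z) = pair x y - pair x z := by
  rw [pair_comm, pair_sub_left, pair_comm y, pair_comm z]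

lemma pair_zero_right (x : Fin (r + 1) → ℤ) : pair x 0 = 0 := by
  simp [pair]

lemma pair_Kc_left (x : Fin (r + 1) → ℤ) : pair (Kc r) x = -3 * x 0 - ∑ i : Fin r, x i.succ := by
  simp [pair, Kc, Fin.succ_ne_zero]

lemma pair_Kc_Kc : pair (Kc r) (Kc r) = 9 - r := by
  simp [pair_Kc_left, Kc, Fin.succ_ne_zero]

lemma even_pair_self_add_pair_Kc (x : Fin (r + 1) → ℤ) : Even (pair x x + pair (Kc r) x) := by
  have h : pair x x + pair (Kc r) x =
      x 0 * (x 0 + 1) - 4 * x 0 - ∑ i : Fin r, x i.succ * (x i.succ + 1) := by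
    rw [pair_Kc_left]
    simp only [pair, mul_add, mul_one, Finset.sum_add_distrib]
    ring
  rw [h]
  exact ((Int.even_mul_succ_self _).sub ⟨2 * x 0, by ring⟩).sub
    (Finset.even_sum _ fun i _ => Int.even_mul_succ_self _)

lemma nine_mul_pair_self_le {x : Fin (r + 1) → ℤ} (hx : pair (Kc r) x = 0) :
    9 * pair x x ≤ ((r : ℤ) - 9) * ∑ i : Fin r, x i.succ ^ 2 := by
  have h0 : 3 * x 0 = -∑ i : Fin r, x i.succ := by rw [pair_Kc_left] at hx; linarith
  have cs := sq_sum_le_card_mul_sum_sq (s := Finset.univ) (f := fun i : Fin r => x i.succ)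
  simp only [Finset.card_univ, Fintype.card_fin] at cs
  have hxx : pair x x = x 0 ^ 2 - ∑ i : Fin r, x i.succ ^ 2 := by simp [pair, sq]
  have h9 : (3 * x 0) ^ 2 = (∑ i : Fin r, x i.succ) ^ 2 := by rw [h0, neg_sq]
  linarith

lemma pair_self_nonpos_of_pair_Kc_eq_zero (hr : r ≤ 9) {x : Fin (r + 1) → ℤ}
    (hx : pair (Kc r) x = 0) : pair x x ≤ 0 := by
  have hsq := nine_mul_pair_self_le hx
  have hsum : 0 ≤ ∑ i : Fin r, x i.succ ^ 2 := Finset.sum_nonneg fun i _ => sq_nonneg _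
  have hr' : (r : ℤ) ≤ 9 := by exact_mod_cast hr
  nlinarith

lemma eq_zero_of_pair_self_eq_zero (hr : r ≤ 8) {x : Fin (r + 1) → ℤ}
    (hx : pair (Kc r) x = 0) (hxx : pair x x = 0) : x = 0 := by
  have hsq := nine_mul_pair_self_le hx
  have hr' : (r : ℤ) ≤ 8 := by exact_mod_cast hr
  have hsum : ∑ i : Fin r, x i.succ ^ 2 = 0 := by
    have : 0 ≤ ∑ i : Fin r, x i.succ ^ 2 := Finset.sum_nonneg fun i _ => sq_nonneg _
    nlinarith
  have hsucc (i : Fin r) : x i.succ = 0 := by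
    rw [Finset.sum_eq_zero_iff_of_nonneg fun i _ => sq_nonneg _] at hsum
    exact pow_eq_zero_iff two_ne_zero |>.mp (hsum i (Finset.mem_univ i))
  have h0 : x 0 = 0 := by
    rw [pair_Kc_left, Finset.sum_eq_zero fun i _ => hsucc i] at hx
    linarith
  funext i
  cases i using Fin.cases with
  | zero => exact h0
  | succ i => exact hsucc i

lemma sq_pair_le_of_pair_Kc_eq_zero (hr : r ≤ 8) {x y : Fin (r + 1) → ℤ}
    (hx : pair (Kc r) x = 0) (hy : pair (Kc r) y = 0) :
    pair x y ^ 2 ≤ pair x x * pair y y := by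
  set a := pair x x
  set b := pair y y
  set c := pair x y
  have hz : pair (Kc r) (b • x - c • y) = 0 := by
    rw [pair_sub_right, pair_smul_right, pair_smul_right, hx, hy]; ring
  have hzz : pair (b • x - c • y) (b • x - c • y) = b * (a * b - c ^ 2) := by
    simp only [pair_sub_left, pair_sub_right, pair_smul_left, pair_smul_right, pair_comm y x]
    ring
  have hb : b ≤ 0 := pair_self_nonpos_of_pair_Kc_eq_zero (by omega) hy
  rcases hb.lt_or_eq with hb | hb
  · have hzz_nonpos := pair_self_nonpos_of_pair_Kc_eq_zero (by omega) hz
    nlinarith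
  · have hc : c = 0 := by
      simp only [c, eq_zero_of_pair_self_eq_zero hr hy hb, pair_zero_right]
    simp [hc, hb]

end Pairing

section ExceptionalClasses

variable {r : ℕ}

def blowupClass (i : Fin r) : Fin (r + 1) → ℤ := Pi.single i.succ 1

def lineClass (i j : Fin r) : Fin (r + 1) → ℤ := Pi.single 0 1 - blowupClass i - blowupClass j

lemma pair_single_zero_right (x : Fin (r + 1) → ℤ) : pair x (Pi.single 0 1) = x 0 := by
  simp [pair]

lemma pair_blowupClass_right (x : Fin (r + 1) → ℤ) (i : Fin r) :
    pair x (blowupClass i) = -x i.succ := by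
  simp [pair, blowupClass, Pi.single_apply]

lemma pair_lineClass_right (x : Fin (r + 1) → ℤ) (i j : Fin r) :
    pair x (lineClass i j) = x 0 + x i.succ + x j.succ := by
  rw [lineClass, pair_sub_right, pair_sub_right, pair_single_zero_right, pair_blowupClass_right,
    pair_blowupClass_right]
  ring

lemma exceptional_blowupClass (i : Fin r) : Exceptional (blowupClass i) := by
  constructor <;> rw [pair_blowupClass_right] <;> simp [blowupClass, Kc]

lemma exceptional_lineClass {i j : Fin r} (hij : i ≠ j) : Exceptional (lineClass i j) := by
  constructor <;> rw [pair_lineClass_right] <;>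
    simp [lineClass, blowupClass, Kc, hij, hij.symm]

end ExceptionalClasses

/-- The conic `2h - ∑_{k ≠ i} e_k` through five of the six points, using `∑ₖ e_k = K₆ + 3h`. -/
def conicClass (i : Fin 6) : Fin 7 → ℤ := -Kc 6 - Pi.single 0 1 + blowupClass i

lemma pair_conicClass_right (x : Fin 7 → ℤ) (i : Fin 6) :
    pair x (conicClass i) = 2 * x 0 + ∑ j : Fin 6, x j.succ - x i.succ := by
  rw [conicClass, pair_add_right, pair_sub_right, pair_neg_right, pair_comm, pair_Kc_left,
    pair_single_zero_right, pair_blowupClass_right]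
  ring

lemma exceptional_conicClass (i : Fin 6) : Exceptional (conicClass i) := by
  unfold Exceptional
  revert i
  decide

/-- Nonnegativity against the 27 lines `e_i`, `h - e_i - e_j` and `2h - ∑_{k ≠ i} e_k`. -/
def NefOnLines (D : Fin 7 → ℤ) : Prop :=
  (∀ i : Fin 6, D i.succ ≤ 0) ∧ (∀ i j : Fin 6, i ≠ j → 0 ≤ D 0 + D i.succ + D j.succ) ∧
    ∀ i : Fin 6, D i.succ ≤ 2 * D 0 + ∑ j : Fin 6, D j.succ

instance : DecidablePred NefOnLines := fun D => by unfold NefOnLines; infer_instance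

lemma Nef.nefOnLines {D : Fin 7 → ℤ} (hD : Nef D) : NefOnLines D := by
  refine ⟨fun i => ?_, fun i j hij => ?_, fun i => ?_⟩
  · simpa [pair_blowupClass_right] using hD _ (exceptional_blowupClass i)
  · simpa [pair_lineClass_right] using hD _ (exceptional_lineClass hij)
  · simpa [pair_conicClass_right] using hD _ (exceptional_conicClass i)

/-- `noncomputable` only because `Finset.Icc` on `ℤ` is elaborated through a noncomputable
lattice instance; `decide +kernel` still evaluates it. -/
noncomputable def degThreeBox : Finset (Fin 7 → ℤ) :=
  Fintype.piFinset fun i => Finset.Icc (if i = 0 then 1 else -2) (if i = 0 then 5 else 0)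

lemma NefOnLines.mem_degThreeBox {D : Fin 7 → ℤ} (hD : NefOnLines D) (hdeg : pair (-Kc 6) D = 3) :
    D ∈ degThreeBox := by
  obtain ⟨hb, hl, hc⟩ := hD
  rw [pair_neg_left, pair_Kc_left] at hdeg
  simp [Fin.forall_fin_succ, Fin.sum_univ_six] at hb hl hc hdeg
  simp [degThreeBox, Fin.forall_fin_succ]
  omega

lemma one_le_pair_self_of_mem_degThreeBox :
    ∀ D ∈ degThreeBox, pair (-Kc 6) D = 3 → NefOnLines D → 1 ≤ pair D D := by
  decide +kernel

lemma Nef.one_le_pair_self {D : Fin 7 → ℤ} (hD : Nef D) (hdeg : pair (-Kc 6) D = 3) :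
    1 ≤ pair D D :=
  one_le_pair_self_of_mem_degThreeBox D (hD.nefOnLines.mem_degThreeBox hdeg) hdeg hD.nefOnLines

lemma pair_Kc_left_of_deg_three {D : Fin 7 → ℤ} (hdeg : pair (-Kc 6) D = 3) :
    pair (Kc 6) D = -3 := by
  rw [pair_neg_left] at hdeg
  omega

lemma eq_neg_Kc_or_pair_self_eq_one {D : Fin 7 → ℤ} (hdeg : pair (-Kc 6) D = 3)
    (hD : 1 ≤ pair D D) : D = -Kc 6 ∨ pair D D = 1 := by
  have hKD := pair_Kc_left_of_deg_three hdeg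
  have hK : pair (Kc 6) (D + Kc 6) = 0 := by
    rw [pair_add_right, hKD, pair_Kc_Kc]; norm_num
  have hsq : pair (D + Kc 6) (D + Kc 6) = pair D D - 3 := by
    rw [pair_add_left, pair_add_right, pair_add_right, pair_comm D (Kc 6), hKD, pair_Kc_Kc]
    ring
  have hle := pair_self_nonpos_of_pair_Kc_eq_zero (by norm_num) hK
  have hodd := even_pair_self_add_pair_Kc D
  rw [hKD, Int.even_iff] at hodd
  rcases (show pair D D = 1 ∨ pair D D = 3 by omega) with h | h
  · exact Or.inr h
  · exact Or.inl <| eq_neg_of_add_eq_zero_left <|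
      eq_zero_of_pair_self_eq_zero (by norm_num) hK (by omega)

lemma nef_of_one_le_pair_self {D : Fin 7 → ℤ} (hdeg : pair (-Kc 6) D = 3)
    (hD : 1 ≤ pair D D) : Nef D := by
  rintro E ⟨hEE, hKE⟩
  have hKD := pair_Kc_left_of_deg_three hdeg
  have hKK : pair (Kc 6) (Kc 6) = 3 := by rw [pair_Kc_Kc]; norm_num
  -- Cauchy–Schwarz in `K₆ᗮ` for `D + K₆` and `3E + K₆`: `9 (D·E - 1)² ≤ 12 (3 - D²) ≤ 24`.
  have cs := sq_pair_le_of_pair_Kc_eq_zero (r := 6) (x := D + Kc 6) (y := (3 : ℤ) • E + Kc 6)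
    (by norm_num)
    (by rw [pair_add_right, hKD, hKK]; norm_num)
    (by rw [pair_add_right, pair_smul_right, hKE, hKK]; norm_num)
  simp only [pair_add_left, pair_add_right, pair_smul_left, pair_smul_right, pair_comm D (Kc 6),
    pair_comm E (Kc 6), hKD, hKK, hKE, hEE] at cs
  nlinarith

lemma setOf_nef_deg_three_eq :
    {D : Fin 7 → ℤ | Nef D ∧ pair (-Kc 6) D = 3} =
      ↑(degThreeBox.filter fun D => pair (-Kc 6) D = 3 ∧ 1 ≤ pair D D) := by
  ext D
  simp only [Set.mem_ofPred_eq, Finset.coe_filter]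
  constructor
  · rintro ⟨hD, hdeg⟩
    exact ⟨hD.nefOnLines.mem_degThreeBox hdeg, hdeg, hD.one_le_pair_self hdeg⟩
  · rintro ⟨-, hdeg, hD⟩
    exact ⟨nef_of_one_le_pair_self hdeg hD, hdeg⟩

lemma card_filter_degThreeBox :
    (degThreeBox.filter fun D => pair (-Kc 6) D = 3 ∧ 1 ≤ pair D D).card = 73 := by
  decide +kernel

/-- Every nef class of anticanonical degree `3` in `Λ₆` is either `−K₆` or a
twisted cubic; consequently there are `72 + 1 = 73` nef classes of
anticanonical degree `3` in `Λ₆`. -/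
theorem nef_deg_three_in_Lambda6 :
    (∀ D : Fin (6 + 1) → ℤ, Nef D → pair (-Kc 6) D = 3 →
        D = -Kc 6 ∨ pair D D = 1) ∧
    {D : Fin (6 + 1) → ℤ | Nef D ∧ pair (-Kc 6) D = 3}.ncard = 72 + 1 := by
  refine ⟨fun D hD hdeg => eq_neg_Kc_or_pair_self_eq_one hdeg (hD.one_le_pair_self hdeg), ?_⟩
  rw [setOf_nef_deg_three_eq, Set.ncard_coe_finset, card_filter_degThreeBox]
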